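/- arXiv:2306.05229 — 9 statements merged into one kernel-verified Lean document; each statement's English description precedes it below -/
import Mathlib

section
/- If p →τ q in an ILTS, then the set of traces producible by p equals the set of traces producible by q, i.e., T(p) = T(q), where T(p) = { t | ∃ p'. p ⇒t p' } and ⇒t abstracts over silent actions. -/
/-- An Instrumentable Labelled Transition System (ILTS): states `Prc`,
traceable actions `Act` (labels `some a`), silent action `τ` (label `none`),
an equivalence on states respected by transitions, silent transitions
confluent with all actions, and a determinacy predicate `det`. -/
structure ILTS (Prc Act : Type) where
  step : Prc → Option Act → Prc → Prop
  eqv : Prc → Prc → Prop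
  ext : Act → Prop
  det : Act → Bool
  eqv_equiv : Equivalence eqv
  eqv_resp : ∀ p q l p', eqv p q → step p l p' → ∃ q', step q l q' ∧ eqv p' q'
  tau_tau : ∀ p p' p'', step p none p' → step p none p'' → eqv p' p''
  tau_conf : ∀ p p' a p'', step p none p' → step p (some a) p'' →
      ∃ q, step p' (some a) q ∧ step p'' none q
  det_spec : ∀ a, det a = true →
      ∀ p p' p'', step p (some a) p' → step p (some a) p'' → eqv p' p''

/-- Weak traceable transitions `p ⇒t q`: abstract over silent actions only. -/
inductive ILTS.wt {Prc Act : Type} (S : ILTS Prc Act) : Prc → List Act → Prc → Prop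
  | refl : ∀ p, ILTS.wt S p [] p
  | tau : ∀ {p p' t q}, S.step p none p' → ILTS.wt S p' t q → ILTS.wt S p t q
  | act : ∀ {p a p' t q}, S.step p (some a) p' → ILTS.wt S p' t q → ILTS.wt S p (a :: t) q

/-- The set of traces producible by a state. -/
def ILTS.traces {Prc Act : Type} (S : ILTS Prc Act) (p : Prc) : Set (List Act) :=
  { t | ∃ q, S.wt p t q }

/-!
A silent step `p →τ q` can be pushed past the first step of any weak run from `p`: if that
step is silent too, its target is `≅ q`, and `≅` preserves runs; if it is visible, silent
confluence closes the diamond and the run continues from the bottom corner. Conversely, a run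
from `q` becomes one from `p` by prepending the silent step.
-/

namespace ILTS

variable {Prc Act : Type} (S : ILTS Prc Act)

theorem traces_subset_of_eqv {p q : Prc} (he : S.eqv p q) : S.traces p ⊆ S.traces q := by
  rintro t ⟨r, hw⟩
  induction hw generalizing q with
  | refl => exact ⟨q, .refl q⟩
  | tau hs _ ih =>
    obtain ⟨q', hs', he'⟩ := S.eqv_resp _ _ _ _ he hs
    obtain ⟨r', hr'⟩ := ih he'
    exact ⟨r', .tau hs' hr'⟩
  | act hs _ ih =>
    obtain ⟨q', hs', he'⟩ := S.eqv_resp _ _ _ _ he hs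
    obtain ⟨r', hr'⟩ := ih he'
    exact ⟨r', .act hs' hr'⟩

theorem traces_subset_of_silent_step {p q : Prc} (h : S.step p none q) :
    S.traces p ⊆ S.traces q := by
  rintro t ⟨r, hw⟩
  induction hw generalizing q with
  | refl => exact ⟨q, .refl q⟩
  | tau hs hw' => exact S.traces_subset_of_eqv (S.tau_tau _ _ _ hs h) ⟨_, hw'⟩
  | act hs _ ih =>
    obtain ⟨s, hqs, hs'⟩ := S.tau_conf _ _ _ _ h hs
    obtain ⟨r', hr'⟩ := ih hs'
    exact ⟨r', .act hqs hr'⟩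

end ILTS

/-- If `p →τ q` in an ILTS, then `T(p) = T(q)`: the states before and after a
silent transition produce exactly the same set of traces. -/
theorem traces_eq_of_silent_step {Prc Act : Type} (S : ILTS Prc Act)
    (p q : Prc) (h : S.step p none q) :
    S.traces p = S.traces q :=
  (S.traces_subset_of_silent_step h).antisymm fun _ ⟨r, hw⟩ => ⟨r, .tau h hw⟩
end

section
/- Monitor trace veracity: for any history H, monitor m, system state p, and any instrumented execution ⟨p, (ε, m), H⟩ →μ₁ ⋯ →μₙ ⟨p', (t, m'), H'⟩ of the instrumentation semantics, the recorded trace t is actually produced by the system: p ⇒t p' (weak traceable transition). -/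
/-- Monitors: `no` (rejection), `yes` (inconclusive ✓), action prefix,
recursion (de Bruijn), variables, and parallel composition where
`par true` is conjunction `⊗` and `par false` is disjunction `⊕`. -/
inductive Mon (Act : Type) : Type
  | no : Mon Act
  | yes : Mon Act
  | act : Act → Mon Act → Mon Act
  | mrec : Mon Act → Mon Act
  | var : Nat → Mon Act
  | par : Bool → Mon Act → Mon Act → Mon Act

/-- Substitute monitor `s` for variable `k` in a monitor. -/
def Mon.substV {Act : Type} : Mon Act → Nat → Mon Act → Mon Act
  | .no, _, _ => .no
  | .yes, _, _ => .yes
  | .act a m, k, s => .act a (m.substV k s)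
  | .mrec m, k, s => .mrec (m.substV (k + 1) s)
  | .var n, k, s => if n = k then s else .var n
  | .par o m n, k, s => .par o (m.substV k s) (n.substV k s)

/-- A monitor can perform a τ move (independent of the trace and history). -/
def canTau {Act : Type} : Mon Act → Prop
  | .mrec _ => True
  | .par _ m n => m = .no ∨ n = .no ∨ canTau m ∨ canTau n
  | _ => False

/-- A monitor can analyse the external action `a`. -/
def canAct {Act : Type} (a : Act) : Mon Act → Prop
  | .yes => True
  | .act b _ => b = a
  | .par _ m n =>
      (canAct a m ∧ canAct a n) ∨
      (n ≠ .no ∧ canAct a m ∧ ¬ canAct a n ∧ ¬ canTau n) ∨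
      (m ≠ .no ∧ canAct a n ∧ ¬ canAct a m ∧ ¬ canTau m)
  | _ => False

/-- Executing-monitor transitions `(t, m) →μ_H (t', m')` relative to a
history `H`; label `none` is τ, label `some a` an external action. -/
inductive MStep {Act : Type} (H : Set (List Act)) :
    List Act × Mon Act → Option Act → List Act × Mon Act → Prop
  | mEnd : ∀ (t : List Act) (a : Act), MStep H (t, .yes) (some a) (t ++ [a], .yes)
  | mAct : ∀ (t : List Act) (a : Act) (m : Mon Act),
      MStep H (t, .act a m) (some a) (t ++ [a], m)
  | mRec : ∀ (t : List Act) (m : Mon Act),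
      MStep H (t, .mrec m) none (t, m.substV 0 (.mrec m))
  | mVrP1L : ∀ (t : List Act) (o : Bool) (m : Mon Act), t ∈ H →
      MStep H (t, .par o .no m) none (t, m)
  | mVrP1R : ∀ (t : List Act) (o : Bool) (m : Mon Act), t ∈ H →
      MStep H (t, .par o m .no) none (t, m)
  | mVrP2L : ∀ (t : List Act) (o : Bool) (m : Mon Act), t ∉ H →
      MStep H (t, .par o .no m) none (t, .no)
  | mVrP2R : ∀ (t : List Act) (o : Bool) (m : Mon Act), t ∉ H →
      MStep H (t, .par o m .no) none (t, .no)
  | mTauL : ∀ {t : List Act} {m m' : Mon Act} (o : Bool) (n : Mon Act),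
      MStep H (t, m) none (t, m') →
      MStep H (t, .par o m n) none (t, .par o m' n)
  | mTauR : ∀ {t : List Act} {n n' : Mon Act} (o : Bool) (m : Mon Act),
      MStep H (t, n) none (t, n') →
      MStep H (t, .par o m n) none (t, .par o m n')
  | mPar1 : ∀ {t t' : List Act} {a : Act} {m m' n n' : Mon Act} (o : Bool),
      MStep H (t, m) (some a) (t', m') → MStep H (t, n) (some a) (t', n') →
      MStep H (t, .par o m n) (some a) (t', .par o m' n')
  | mPar2L : ∀ {t t' : List Act} {a : Act} {m m' : Mon Act} (o : Bool) (n : Mon Act),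
      n ≠ .no → MStep H (t, m) (some a) (t', m') →
      ¬ canAct a n → ¬ canTau n →
      MStep H (t, .par o m n) (some a) (t', m')
  | mPar2R : ∀ {t t' : List Act} {a : Act} {n n' : Mon Act} (o : Bool) (m : Mon Act),
      m ≠ .no → MStep H (t, n) (some a) (t', n') →
      ¬ canAct a m → ¬ canTau m →
      MStep H (t, .par o m n) (some a) (t', n')

/-- Weak traceable transitions `p ⇒t p'` of the system: abstract over silent
actions (`none`) only; `t` records all traceable (external and internal)
actions. -/
inductive SysWT {Prc Act : Type} (step : Prc → Option Act → Prc → Prop) :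
    Prc → List Act → Prc → Prop
  | refl : ∀ p, SysWT step p [] p
  | tau : ∀ {p p' t q}, step p none p' → SysWT step p' t q → SysWT step p t q
  | act : ∀ {p a p' t q}, step p (some a) p' → SysWT step p' t q →
      SysWT step p (a :: t) q

/-- Monitored-system configurations: a system state, an executing-monitor
(accumulated trace and monitor state), and a history. -/
abbrev Cfg (Prc Act : Type) := Prc × (List Act × Mon Act) × Set (List Act)

/-- The instrumentation semantics; `Ext` distinguishes external from internal
traceable actions, `none` labels silent moves. -/
inductive IStep {Prc Act : Type} (step : Prc → Option Act → Prc → Prop)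
    (Ext : Act → Prop) : Cfg Prc Act → Option Act → Cfg Prc Act → Prop
  | iNo : ∀ (p : Prc) (t : List Act) (H : Set (List Act)),
      IStep step Ext (p, (t, .no), H) none (p, (t, .yes), insert t H)
  | iTer : ∀ {p p' : Prc} {a : Act} (t : List Act) (m : Mon Act)
      (H : Set (List Act)), m ≠ Mon.no → step p (some a) p' → Ext a →
      ¬ canAct a m → ¬ canTau m →
      IStep step Ext (p, (t, m), H) (some a) (p', (t ++ [a], .yes), H)
  | iAsS : ∀ {p p' : Prc} (t : List Act) (m : Mon Act) (H : Set (List Act)),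
      m ≠ Mon.no → step p none p' →
      IStep step Ext (p, (t, m), H) none (p', (t, m), H)
  | iAsI : ∀ {p p' : Prc} {i : Act} (t : List Act) (m : Mon Act)
      (H : Set (List Act)), m ≠ Mon.no → step p (some i) p' → ¬ Ext i →
      IStep step Ext (p, (t, m), H) none (p', (t ++ [i], m), H)
  | iAsM : ∀ {t t' : List Act} {m m' : Mon Act} (p : Prc) (H : Set (List Act)),
      MStep H (t, m) none (t', m') →
      IStep step Ext (p, (t, m), H) none (p, (t', m'), H)
  | iMon : ∀ {p p' : Prc} {a : Act} {t t' : List Act} {m m' : Mon Act}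
      (H : Set (List Act)), step p (some a) p' → Ext a →
      MStep H (t, m) (some a) (t', m') →
      IStep step Ext (p, (t, m), H) (some a) (p', (t', m'), H)

/-!
Each instrumentation step appends to the recorded trace exactly the traceable action, if any, that
the system performs in that step: monitor τ-moves and the verdict step `iNo` touch neither the
trace nor the system, and when the monitor analyses an external action it extends the trace by the
very action the system performs. Along an execution the recorded trace therefore grows by a weak
traceable run of the system.
-/

theorem MStep.trace_eq {Act : Type} {H : Set (List Act)} {c c' : List Act × Mon Act}
    {μ : Option Act} (h : MStep H c μ c') : c'.1 = c.1 ++ μ.toList := by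
  induction h <;> simp_all

namespace SysWT

variable {Prc Act : Type} {step : Prc → Option Act → Prc → Prop}

theorem single {p p' : Prc} {a : Act} (h : step p (some a) p') : SysWT step p [a] p' :=
  .act h (.refl p')

theorem append {p q r : Prc} {s s' : List Act} (h : SysWT step p s q)
    (h' : SysWT step q s' r) : SysWT step p (s ++ s') r := by
  induction h with
  | refl => exact h'
  | tau hst _ ih => exact .tau hst (ih h')
  | act hst _ ih => exact .act hst (ih h')

end SysWT

namespace IStep

variable {Prc Act : Type} {step : Prc → Option Act → Prc → Prop} {Ext : Act → Prop}

theorem exists_sysWT {c c' : Cfg Prc Act} {μ : Option Act} (h : IStep step Ext c μ c') :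
    ∃ s, c'.2.1.1 = c.2.1.1 ++ s ∧ SysWT step c.1 s c'.1 := by
  cases h with
  | iNo p _ _ => exact ⟨[], by simp, .refl p⟩
  | iTer _ _ _ _ hst => exact ⟨_, rfl, .single hst⟩
  | iAsS _ _ _ _ hst => exact ⟨[], by simp, .tau hst (.refl _)⟩
  | iAsI _ _ _ _ hst => exact ⟨_, rfl, .single hst⟩
  | iAsM p _ hm => exact ⟨[], by simpa using hm.trace_eq, .refl p⟩
  | iMon _ hst _ hm => exact ⟨_, hm.trace_eq, .single hst⟩

theorem exists_sysWT_of_reflTransGen {c c' : Cfg Prc Act}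
    (h : Relation.ReflTransGen (fun c c' => ∃ μ, IStep step Ext c μ c') c c') :
    ∃ s, c'.2.1.1 = c.2.1.1 ++ s ∧ SysWT step c.1 s c'.1 := by
  induction h using Relation.ReflTransGen.head_induction_on with
  | refl => exact ⟨[], by simp, .refl _⟩
  | head hstep _ ih =>
    obtain ⟨μ, hstep⟩ := hstep
    obtain ⟨s₁, hs₁, hw₁⟩ := hstep.exists_sysWT
    obtain ⟨s₂, hs₂, hw₂⟩ := ih
    exact ⟨s₁ ++ s₂, by rw [hs₂, hs₁, List.append_assoc], hw₁.append hw₂⟩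

end IStep

/-- Monitor trace veracity: any instrumented execution starting from the empty
trace only records traces actually produced by the system: `p ⇒t p'`. -/
theorem trace_veracity {Prc Act : Type} (step : Prc → Option Act → Prc → Prop)
    (Ext : Act → Prop) (H H' : Set (List Act)) (m m' : Mon Act)
    (p p' : Prc) (t : List Act)
    (h : Relation.ReflTransGen (fun c c' => ∃ μ, IStep step Ext c μ c')
      (p, ([], m), H) (p', (t, m'), H')) :
    SysWT step p t p' := by
  obtain ⟨s, rfl, hw⟩ := IStep.exists_sysWT_of_reflTransGen h
  exact hw
end

section
/- τ-race absence for monitors: if an executing-monitor (t, m) can perform a τ transition (t, m) →τ_H (t, m'), then it cannot perform any external-action transition: (t, m) ↛a_H for all external actions a. -/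
/-!
A τ-move is only ever enabled by a recursion binder or by a verdict `no` sitting directly under
a parallel composition, whereas an external move needs every component that takes part in it to
be neither `no` nor able to move silently (`mPar2L/R` demand this of the idle component).
By induction on the monitor, a monitor that can analyse an action therefore cannot move silently.
-/

section

variable {Act : Type}

theorem Mon.ne_no_of_canAct {a : Act} {m : Mon Act} (h : canAct a m) : m ≠ .no := by
  rintro rfl
  exact h

theorem not_canTau_of_canAct {a : Act} {m : Mon Act} (h : canAct a m) : ¬ canTau m := by
  induction m with
  | par o m n ihm ihn =>
    have stable : ∀ {c : Mon Act}, (canAct a c → ¬ canTau c) → canAct a c →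
        c ≠ .no ∧ ¬ canTau c :=
      fun ih hc => ⟨Mon.ne_no_of_canAct hc, ih hc⟩
    obtain ⟨⟨hm, hm'⟩, hn, hn'⟩ : (m ≠ .no ∧ ¬ canTau m) ∧ (n ≠ .no ∧ ¬ canTau n) := by
      rcases h with ⟨hm, hn⟩ | ⟨hn, hm, -, hn'⟩ | ⟨hm, hn, -, hm'⟩
      · exact ⟨stable ihm hm, stable ihn hn⟩
      · exact ⟨stable ihm hm, hn, hn'⟩
      · exact ⟨⟨hm, hm'⟩, stable ihn hn⟩
    simp only [canTau]
    tauto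
  | _ => simp_all only [canAct, canTau, not_false_eq_true]

namespace MStep

variable {H : Set (List Act)} {p q : List Act × Mon Act}

theorem canTau_of_tau (h : MStep H p none q) : canTau p.2 := by
  generalize hμ : (none : Option Act) = μ at h
  induction h with
  | mRec | mVrP1L | mVrP1R | mVrP2L | mVrP2R => simp [canTau]
  | mTauL _ _ _ ih => exact Or.inr (Or.inr (Or.inl (ih hμ)))
  | mTauR _ _ _ ih => exact Or.inr (Or.inr (Or.inr (ih hμ)))
  | _ => cases hμ

theorem canAct_of_act {a : Act} (h : MStep H p (some a) q) : canAct a p.2 := by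
  generalize hμ : some a = μ at h
  induction h with
  | mEnd => trivial
  | mAct => cases hμ; rfl
  | mPar1 _ _ _ ihm ihn => exact Or.inl ⟨ihm hμ, ihn hμ⟩
  | mPar2L _ _ hn _ hca hct ih => cases hμ; exact Or.inr (Or.inl ⟨hn, ih rfl, hca, hct⟩)
  | mPar2R _ _ hm _ hca hct ih => cases hμ; exact Or.inr (Or.inr ⟨hm, ih rfl, hca, hct⟩)
  | _ => cases hμ

end MStep

end

/-- τ-race absence: an executing-monitor that can perform a τ transition cannot
perform any external-action transition. -/
theorem tau_race_absence {Act : Type} (H : Set (List Act))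
    (t : List Act) (m : Mon Act) (s : List Act × Mon Act)
    (h : MStep H (t, m) none s) :
    ∀ (a : Act) (s' : List Act × Mon Act), ¬ MStep H (t, m) (some a) s' :=
  fun _ _ h' => not_canTau_of_canAct h'.canAct_of_act h.canTau_of_tau
end

section
/- Monitor τ-confluence: if (t, m) →τ_H (t, m') and (t, m) →τ_H (t, m''), then there exists a monitor n and sequences of τ moves (t, m') (→τ_H)* (t, n) and (t, m'') (→τ_H)* (t, n). -/
/-!
Induction on the monitor. Only unfolding and parallel composition have τ moves, and unfolding
is deterministic. For `a ⊙ b`, moves inside different components commute, moves inside the same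
component are joined by induction, and a verdict move of `no ⊙ b` against a move `b → b'` is
joined because both sides reach the residual of `no ⊙ b'` (`b'` if `t ∈ H`, else `no`).
-/

open Classical in
/-- The monitor that `no ⊙ m` (either side, either operator) becomes by rule mVrP1 or mVrP2. -/
noncomputable def parNoResidual {Act : Type} (H : Set (List Act)) (t : List Act)
    (m : Mon Act) : Mon Act :=
  if t ∈ H then m else .no

def TauJoinable {Act : Type} (H : Set (List Act)) (t : List Act) (m₁ m₂ : Mon Act) : Prop :=
  ∃ n : Mon Act,
    Relation.ReflTransGen (fun s s' => MStep H s none s') (t, m₁) (t, n) ∧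
    Relation.ReflTransGen (fun s s' => MStep H s none s') (t, m₂) (t, n)

def TauConfluentAt {Act : Type} (H : Set (List Act)) (t : List Act) (m : Mon Act) : Prop :=
  ∀ m₁ m₂, MStep H (t, m) none (t, m₁) → MStep H (t, m) none (t, m₂) → TauJoinable H t m₁ m₂

section

variable {Act : Type} {H : Set (List Act)} {t : List Act}

namespace MStep

theorem fst_eq_of_tau {s s' : List Act × Mon Act} (h : MStep H s none s') : s'.1 = s.1 := by
  cases h <;> rfl

theorem tau_par_left (o : Bool) (b : Mon Act) {s s' : List Act × Mon Act}
    (h : MStep H s none s') : MStep H (s.1, .par o s.2 b) none (s'.1, .par o s'.2 b) := by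
  obtain ⟨t, m⟩ := s
  obtain ⟨t', m'⟩ := s'
  obtain rfl : t' = t := h.fst_eq_of_tau
  exact .mTauL o b h

theorem tau_par_right (o : Bool) (a : Mon Act) {s s' : List Act × Mon Act}
    (h : MStep H s none s') : MStep H (s.1, .par o a s.2) none (s'.1, .par o a s'.2) := by
  obtain ⟨t, m⟩ := s
  obtain ⟨t', m'⟩ := s'
  obtain rfl : t' = t := h.fst_eq_of_tau
  exact .mTauR o a h

theorem par_no_left (o : Bool) (m : Mon Act) :
    MStep H (t, .par o .no m) none (t, parNoResidual H t m) := by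
  unfold parNoResidual
  split_ifs with hH
  exacts [.mVrP1L t o m hH, .mVrP2L t o m hH]

theorem par_no_right (o : Bool) (m : Mon Act) :
    MStep H (t, .par o m .no) none (t, parNoResidual H t m) := by
  unfold parNoResidual
  split_ifs with hH
  exacts [.mVrP1R t o m hH, .mVrP2R t o m hH]

theorem tau_par_cases {o : Bool} {a b m : Mon Act} (h : MStep H (t, .par o a b) none (t, m)) :
    (a = .no ∧ m = parNoResidual H t b) ∨ (b = .no ∧ m = parNoResidual H t a) ∨
    (∃ a', MStep H (t, a) none (t, a') ∧ m = .par o a' b) ∨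
    (∃ b', MStep H (t, b) none (t, b') ∧ m = .par o a b') := by
  cases h with
  | mVrP1L _ _ _ hH => exact .inl ⟨rfl, by simp [parNoResidual, hH]⟩
  | mVrP1R _ _ _ hH => exact .inr <| .inl ⟨rfl, by simp [parNoResidual, hH]⟩
  | mVrP2L _ _ _ hH => exact .inl ⟨rfl, by simp [parNoResidual, hH]⟩
  | mVrP2R _ _ _ hH => exact .inr <| .inl ⟨rfl, by simp [parNoResidual, hH]⟩
  | mTauL _ _ ha => exact .inr <| .inr <| .inl ⟨_, ha, rfl⟩
  | mTauR _ _ hb => exact .inr <| .inr <| .inr ⟨_, hb, rfl⟩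

end MStep

theorem reflTransGen_tau_par_left (o : Bool) (b : Mon Act) {x y : Mon Act}
    (h : Relation.ReflTransGen (fun s s' => MStep H s none s') (t, x) (t, y)) :
    Relation.ReflTransGen (fun s s' => MStep H s none s') (t, .par o x b) (t, .par o y b) :=
  Relation.ReflTransGen.lift (fun s => (s.1, Mon.par o s.2 b))
    (fun _ _ hs => hs.tau_par_left o b) _ _ h

theorem reflTransGen_tau_par_right (o : Bool) (a : Mon Act) {x y : Mon Act}
    (h : Relation.ReflTransGen (fun s s' => MStep H s none s') (t, x) (t, y)) :
    Relation.ReflTransGen (fun s s' => MStep H s none s') (t, .par o a x) (t, .par o a y) :=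
  Relation.ReflTransGen.lift (fun s => (s.1, Mon.par o a s.2))
    (fun _ _ hs => hs.tau_par_right o a) _ _ h

theorem reflTransGen_tau_parNoResidual {m m' : Mon Act} (h : MStep H (t, m) none (t, m')) :
    Relation.ReflTransGen (fun s s' => MStep H s none s')
      (t, parNoResidual H t m) (t, parNoResidual H t m') := by
  unfold parNoResidual
  split_ifs
  exacts [.single h, .refl]

namespace TauJoinable

theorem refl (m : Mon Act) : TauJoinable H t m m :=
  ⟨m, .refl, .refl⟩

theorem symm {m₁ m₂ : Mon Act} (h : TauJoinable H t m₁ m₂) : TauJoinable H t m₂ m₁ :=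
  let ⟨n, h₁, h₂⟩ := h
  ⟨n, h₂, h₁⟩

theorem of_tau_tau {m₁ m₂ n : Mon Act} (h₁ : MStep H (t, m₁) none (t, n))
    (h₂ : MStep H (t, m₂) none (t, n)) : TauJoinable H t m₁ m₂ :=
  ⟨n, .single h₁, .single h₂⟩

theorem par_left {a₁ a₂ : Mon Act} (h : TauJoinable H t a₁ a₂) (o : Bool) (b : Mon Act) :
    TauJoinable H t (.par o a₁ b) (.par o a₂ b) :=
  let ⟨n, h₁, h₂⟩ := h
  ⟨.par o n b, reflTransGen_tau_par_left o b h₁, reflTransGen_tau_par_left o b h₂⟩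

theorem par_right {b₁ b₂ : Mon Act} (h : TauJoinable H t b₁ b₂) (o : Bool) (a : Mon Act) :
    TauJoinable H t (.par o a b₁) (.par o a b₂) :=
  let ⟨n, h₁, h₂⟩ := h
  ⟨.par o a n, reflTransGen_tau_par_right o a h₁, reflTransGen_tau_par_right o a h₂⟩

theorem parNoResidual_par_no_left (o : Bool) {b b' : Mon Act}
    (hb : MStep H (t, b) none (t, b')) :
    TauJoinable H t (parNoResidual H t b) (.par o .no b') :=
  ⟨_, reflTransGen_tau_parNoResidual hb, .single (MStep.par_no_left o b')⟩

theorem parNoResidual_par_no_right (o : Bool) {a a' : Mon Act}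
    (ha : MStep H (t, a) none (t, a')) :
    TauJoinable H t (parNoResidual H t a) (.par o a' .no) :=
  ⟨_, reflTransGen_tau_parNoResidual ha, .single (MStep.par_no_right o a')⟩

theorem tau_par_comm {o : Bool} {a a' b b' : Mon Act} (ha : MStep H (t, a) none (t, a'))
    (hb : MStep H (t, b) none (t, b')) : TauJoinable H t (.par o a' b) (.par o a b') :=
  of_tau_tau (.mTauR o a' hb) (.mTauL o b' ha)

end TauJoinable

theorem tauConfluentAt_par {a b : Mon Act} (ha : TauConfluentAt H t a)
    (hb : TauConfluentAt H t b) (o : Bool) : TauConfluentAt H t (.par o a b) := by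
  intro m₁ m₂ h₁ h₂
  rcases h₁.tau_par_cases with ⟨rfl, rfl⟩ | ⟨rfl, rfl⟩ | ⟨a₁, ha₁, rfl⟩ | ⟨b₁, hb₁, rfl⟩ <;>
  rcases h₂.tau_par_cases with ⟨⟨⟩, rfl⟩ | ⟨⟨⟩, rfl⟩ | ⟨a₂, ha₂, rfl⟩ | ⟨b₂, hb₂, rfl⟩
  -- `cases` closes the goals in which a `no` component would make a τ move.
  · exact .refl _
  · exact .refl _
  · cases ha₂
  · exact .parNoResidual_par_no_left o hb₂
  · exact .refl _
  · exact .refl _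
  · exact .parNoResidual_par_no_right o ha₂
  · cases hb₂
  · cases ha₁
  · exact (TauJoinable.parNoResidual_par_no_right o ha₁).symm
  · exact (ha _ _ ha₁ ha₂).par_left o b
  · exact .tau_par_comm ha₁ hb₂
  · exact (TauJoinable.parNoResidual_par_no_left o hb₁).symm
  · cases hb₁
  · exact (TauJoinable.tau_par_comm ha₂ hb₁).symm
  · exact (hb _ _ hb₁ hb₂).par_right o a

end

/-- Monitor τ-confluence: two τ derivatives of the same executing-monitor can be
joined by sequences of τ moves to a common monitor state. -/
theorem monitor_tau_confluence {Act : Type} (H : Set (List Act))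
    (t : List Act) (m m' m'' : Mon Act)
    (h1 : MStep H (t, m) none (t, m'))
    (h2 : MStep H (t, m) none (t, m'')) :
    ∃ n : Mon Act,
      Relation.ReflTransGen (fun s s' => MStep H s none s') (t, m') (t, n) ∧
      Relation.ReflTransGen (fun s s' => MStep H s none s') (t, m'') (t, n) := by
  suffices ∀ m, TauConfluentAt H t m from this m m' m'' h1 h2
  intro m
  induction m with
  | mrec k => rintro _ _ ⟨⟩ ⟨⟩; exact .refl _
  | par o a b iha ihb => exact tauConfluentAt_par iha ihb o
  | _ => rintro _ _ ⟨⟩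
end

section
/- Monitor determinism: if (t, m) ⇒u_H (t', m') and (t, m) ⇒u_H (t'', m'') are two weak transition sequences of the same executing-monitor over the same action sequence u, then t' = t'' and the resulting monitors converge: there exists n with (t', m') (→τ_H)* (t', n) and (t'', m'') (→τ_H)* (t'', n). -/
/-- Weak monitor transitions `(t, m) ⇒u_H (t', m')`: interleavings of τ moves
and external-action moves spelling out the action sequence `u`. -/
inductive MWeak {Act : Type} (H : Set (List Act)) :
    List Act × Mon Act → List Act → List Act × Mon Act → Prop
  | refl : ∀ s, MWeak H s [] s
  | tau : ∀ {s s' u s''}, MStep H s none s' → MWeak H s' u s'' → MWeak H s u s''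
  | act : ∀ {s s' u s''} {a : Act}, MStep H s (some a) s' → MWeak H s' u s'' →
      MWeak H s (a :: u) s''

/-! τ-moves never change the trace, and two τ-moves from the same state can be rejoined in at
most one step each (they touch different components of a parallel composition, or resolve the
same `no` branch against the same history), so τ-reduction is confluent by Church–Rosser.
A monitor able to perform an external action is not τ-enabled, and that move is deterministic.
Hence before each action of `u` the two runs reach, by τ-moves, the same τ-normal state, take
the same step, and by induction end in joinable states, which then share their trace. -/

open Relation

theorem Relation.ReflGen.lift {α β : Type*} {r : α → α → Prop} {p : β → β → Prop}
    {a b : α} (f : α → β) (hf : ∀ a b, r a b → p (f a) (f b)) (h : ReflGen r a b) :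
    ReflGen p (f a) (f b) := by
  cases h with
  | refl => exact .refl
  | single h => exact .single (hf _ _ h)

abbrev TauStep {Act : Type} (H : Set (List Act)) :
    List Act × Mon Act → List Act × Mon Act → Prop :=
  fun s s' => MStep H s none s'

variable {Act : Type} {H : Set (List Act)}

namespace MStep

theorem fst_eq {s s' : List Act × Mon Act} {μ : Option Act} (h : MStep H s μ s') :
    s'.1 = s.1 ++ μ.toList := by
  induction h <;> simp_all

theorem not_no {t : List Act} {μ : Option Act} {s' : List Act × Mon Act} :
    ¬ MStep H (t, .no) μ s' := nofun

theorem enabled {s s' : List Act × Mon Act} {μ : Option Act} (h : MStep H s μ s') :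
    match μ with
    | none => canTau s.2
    | some a => canAct a s.2 ∧ ¬ canTau s.2 := by
  induction h with
  | mEnd => exact ⟨trivial, id⟩
  | mAct => exact ⟨rfl, id⟩
  | mRec => trivial
  | mVrP1L | mVrP2L => exact .inl rfl
  | mVrP1R | mVrP2R => exact .inr (.inl rfl)
  | mTauL _ _ _ ih => exact .inr (.inr (.inl ih))
  | mTauR _ _ _ ih => exact .inr (.inr (.inr ih))
  | mPar1 _ hm hn ihm ihn =>
    refine ⟨.inl ⟨ihm.1, ihn.1⟩, ?_⟩
    rintro (rfl | rfl | hc | hc)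
    exacts [not_no hm, not_no hn, ihm.2 hc, ihn.2 hc]
  | mPar2L _ _ hne hm hca hct ihm =>
    refine ⟨.inr (.inl ⟨hne, ihm.1, hca, hct⟩), ?_⟩
    rintro (rfl | rfl | hc | hc)
    exacts [not_no hm, hne rfl, ihm.2 hc, hct hc]
  | mPar2R _ _ hne hn hca hct ihn =>
    refine ⟨.inr (.inr ⟨hne, ihn.1, hca, hct⟩), ?_⟩
    rintro (rfl | rfl | hc | hc)
    exacts [hne rfl, not_no hn, hct hc, ihn.2 hc]

theorem canTau_of_tau_s9 {s s' : List Act × Mon Act} (h : MStep H s none s') : canTau s.2 :=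
  h.enabled

theorem canAct_of_act_s9 {s s' : List Act × Mon Act} {a : Act} (h : MStep H s (some a) s') :
    canAct a s.2 :=
  h.enabled.1

theorem not_canTau_of_act {s s' : List Act × Mon Act} {a : Act} (h : MStep H s (some a) s') :
    ¬ canTau s.2 :=
  h.enabled.2

theorem act_deterministic {s s₁ s₂ : List Act × Mon Act} {a : Act}
    (h₁ : MStep H s (some a) s₁) (h₂ : MStep H s (some a) s₂) : s₁ = s₂ := by
  generalize hμ : some a = μ at h₁
  induction h₁ generalizing s₂ with
  | mEnd | mAct => cases hμ; cases h₂; rfl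
  | mRec | mVrP1L | mVrP1R | mVrP2L | mVrP2R | mTauL | mTauR => cases hμ
  | mPar1 _ hm₁ hn₁ ihm ihn =>
    cases hμ
    cases h₂ with
    | mPar1 _ hm₂ hn₂ => cases ihm hm₂ rfl; cases ihn hn₂ rfl; rfl
    | mPar2L _ _ _ _ hca => exact absurd hn₁.canAct_of_act_s9 hca
    | mPar2R _ _ _ _ hca => exact absurd hm₁.canAct_of_act_s9 hca
  | mPar2L _ _ _ hm₁ hca _ ihm =>
    cases hμ
    cases h₂ with
    | mPar1 _ _ hn₂ => exact absurd hn₂.canAct_of_act_s9 hca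
    | mPar2L _ _ _ hm₂ => exact ihm hm₂ rfl
    | mPar2R _ _ _ _ hca₂ => exact absurd hm₁.canAct_of_act_s9 hca₂
  | mPar2R _ _ _ hn₁ hca _ ihn =>
    cases hμ
    cases h₂ with
    | mPar1 _ hm₂ _ => exact absurd hm₂.canAct_of_act_s9 hca
    | mPar2L _ _ _ hm₂ => exact absurd hm₂.canAct_of_act_s9 hca
    | mPar2R _ _ _ hn₂ => exact ihn hn₂ rfl

end MStep

namespace TauStep

theorem fst_eq {s s' : List Act × Mon Act} (h : TauStep H s s') : s'.1 = s.1 := by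
  simpa using MStep.fst_eq h

theorem par_left (o : Bool) (n : Mon Act) {s s' : List Act × Mon Act} (h : TauStep H s s') :
    TauStep H (s.1, .par o s.2 n) (s'.1, .par o s'.2 n) := by
  obtain ⟨t, m⟩ := s
  obtain ⟨t', m'⟩ := s'
  obtain rfl : t' = t := h.fst_eq
  exact .mTauL o n h

theorem par_right (o : Bool) (m : Mon Act) {s s' : List Act × Mon Act} (h : TauStep H s s') :
    TauStep H (s.1, .par o m s.2) (s'.1, .par o m s'.2) := by
  obtain ⟨t, n⟩ := s
  obtain ⟨t', n'⟩ := s'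
  obtain rfl : t' = t := h.fst_eq
  exact .mTauR o m h

theorem diamond {s s₁ s₂ : List Act × Mon Act}
    (h₁ : MStep H s none s₁) (h₂ : MStep H s none s₂) :
    ∃ d, ReflGen (TauStep H) s₁ d ∧ ReflGen (TauStep H) s₂ d := by
  generalize hμ : none = μ at h₁
  induction h₁ generalizing s₂ with
  | mEnd | mAct | mPar1 | mPar2L | mPar2R => cases hμ
  | mRec => cases h₂; exact ⟨_, .refl, .refl⟩
  | mVrP1L _ _ _ hH =>
    cases h₂ with
    | mVrP1L | mVrP1R => exact ⟨_, .refl, .refl⟩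
    | mVrP2L _ _ _ hH' | mVrP2R _ _ _ hH' => exact absurd hH hH'
    | mTauL _ _ h => exact absurd h MStep.not_no
    | mTauR _ _ h => exact ⟨_, .single h, .single (.mVrP1L _ _ _ hH)⟩
  | mVrP1R _ _ _ hH =>
    cases h₂ with
    | mVrP1L | mVrP1R => exact ⟨_, .refl, .refl⟩
    | mVrP2L _ _ _ hH' | mVrP2R _ _ _ hH' => exact absurd hH hH'
    | mTauL _ _ h => exact ⟨_, .single h, .single (.mVrP1R _ _ _ hH)⟩
    | mTauR _ _ h => exact absurd h MStep.not_no
  | mVrP2L _ _ _ hH =>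
    cases h₂ with
    | mVrP1L _ _ _ hH' | mVrP1R _ _ _ hH' => exact absurd hH' hH
    | mVrP2L | mVrP2R => exact ⟨_, .refl, .refl⟩
    | mTauL _ _ h => exact absurd h MStep.not_no
    | mTauR => exact ⟨_, .refl, .single (.mVrP2L _ _ _ hH)⟩
  | mVrP2R _ _ _ hH =>
    cases h₂ with
    | mVrP1L _ _ _ hH' | mVrP1R _ _ _ hH' => exact absurd hH' hH
    | mVrP2L | mVrP2R => exact ⟨_, .refl, .refl⟩
    | mTauL => exact ⟨_, .refl, .single (.mVrP2R _ _ _ hH)⟩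
    | mTauR _ _ h => exact absurd h MStep.not_no
  | mTauL o n hm₁ ihm =>
    cases h₂ with
    | mVrP1L | mVrP2L => exact absurd hm₁ MStep.not_no
    | mVrP1R _ _ _ hH => exact ⟨_, .single (.mVrP1R _ _ _ hH), .single hm₁⟩
    | mVrP2R _ _ _ hH => exact ⟨_, .single (.mVrP2R _ _ _ hH), .refl⟩
    | mTauL _ _ hm₂ =>
      obtain ⟨d, r₁, r₂⟩ := ihm hm₂ hμ
      let f (s : List Act × Mon Act) : List Act × Mon Act := (s.1, .par o s.2 n)
      exact ⟨f d, r₁.lift f fun _ _ => par_left o n, r₂.lift f fun _ _ => par_left o n⟩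
    | mTauR _ _ hn₂ => exact ⟨_, .single (.mTauR o _ hn₂), .single (.mTauL o _ hm₁)⟩
  | mTauR o m hn₁ ihn =>
    cases h₂ with
    | mVrP1R | mVrP2R => exact absurd hn₁ MStep.not_no
    | mVrP1L _ _ _ hH => exact ⟨_, .single (.mVrP1L _ _ _ hH), .single hn₁⟩
    | mVrP2L _ _ _ hH => exact ⟨_, .single (.mVrP2L _ _ _ hH), .refl⟩
    | mTauL _ _ hm₂ => exact ⟨_, .single (.mTauL o _ hm₂), .single (.mTauR o _ hn₁)⟩
    | mTauR _ _ hn₂ =>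
      obtain ⟨d, r₁, r₂⟩ := ihn hn₂ hμ
      let f (s : List Act × Mon Act) : List Act × Mon Act := (s.1, .par o m s.2)
      exact ⟨f d, r₁.lift f fun _ _ => par_right o m, r₂.lift f fun _ _ => par_right o m⟩

theorem confluent {s s₁ s₂ : List Act × Mon Act} (h₁ : ReflTransGen (TauStep H) s s₁)
    (h₂ : ReflTransGen (TauStep H) s s₂) : Join (ReflTransGen (TauStep H)) s₁ s₂ :=
  church_rosser
    (fun _ _ _ hb hc => (diamond hb hc).imp fun _ ⟨rb, rc⟩ => ⟨rb, rc.to_reflTransGen⟩)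
    h₁ h₂

theorem reflTransGen_fst_eq {s s' : List Act × Mon Act}
    (h : ReflTransGen (TauStep H) s s') : s'.1 = s.1 := by
  induction h with
  | refl => rfl
  | tail _ hstep ih => exact hstep.fst_eq.trans ih

theorem reflTransGen_eq_of_not_canTau {s s' : List Act × Mon Act} (hs : ¬ canTau s.2)
    (h : ReflTransGen (TauStep H) s s') : s = s' := by
  rcases h.cases_head with rfl | ⟨_, hstep, _⟩
  · rfl
  · exact absurd hstep.canTau_of_tau_s9 hs

end TauStep

namespace MWeak

theorem reflTransGen_of_nil {s s' : List Act × Mon Act} (h : MWeak H s [] s') :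
    ReflTransGen (TauStep H) s s' := by
  generalize hu : [] = u at h
  induction h with
  | refl => rfl
  | tau hstep _ ih => exact .head hstep (ih hu)
  | act => cases hu

theorem exists_of_cons {s s' : List Act × Mon Act} {a : Act} {u : List Act}
    (h : MWeak H s (a :: u) s') :
    ∃ s₁ s₂, ReflTransGen (TauStep H) s s₁ ∧ MStep H s₁ (some a) s₂ ∧
      MWeak H s₂ u s' := by
  generalize hu : a :: u = u' at h
  induction h with
  | refl => cases hu
  | tau hstep _ ih =>
    obtain ⟨s₁, s₂, hτ, hact, hrest⟩ := ih hu
    exact ⟨s₁, s₂, .head hstep hτ, hact, hrest⟩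
  | act hact hrest =>
    cases hu
    exact ⟨_, _, .refl, hact, hrest⟩

theorem join {s s₁ s₂ : List Act × Mon Act} {u : List Act}
    (h₁ : MWeak H s u s₁) (h₂ : MWeak H s u s₂) :
    Join (ReflTransGen (TauStep H)) s₁ s₂ := by
  induction u generalizing s with
  | nil => exact TauStep.confluent h₁.reflTransGen_of_nil h₂.reflTransGen_of_nil
  | cons a u ih =>
    obtain ⟨r₁, q₁, hτ₁, hact₁, hrest₁⟩ := h₁.exists_of_cons
    obtain ⟨r₂, q₂, hτ₂, hact₂, hrest₂⟩ := h₂.exists_of_cons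
    obtain ⟨d, hd₁, hd₂⟩ := TauStep.confluent hτ₁ hτ₂
    obtain rfl := TauStep.reflTransGen_eq_of_not_canTau hact₁.not_canTau_of_act hd₁
    obtain rfl := TauStep.reflTransGen_eq_of_not_canTau hact₂.not_canTau_of_act hd₂
    obtain rfl := hact₁.act_deterministic hact₂
    exact ih hrest₁ hrest₂

end MWeak

/-- Monitor determinism: two weak transition sequences of the same
executing-monitor over the same action sequence `u` accumulate the same trace
and reach τ-convergent monitor states. -/
theorem monitor_determinism {Act : Type} (H : Set (List Act))
    (t t' t'' u : List Act) (m m' m'' : Mon Act)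
    (h1 : MWeak H (t, m) u (t', m'))
    (h2 : MWeak H (t, m) u (t'', m'')) :
    t' = t'' ∧ ∃ n : Mon Act,
      Relation.ReflTransGen (fun s s' => MStep H s none s') (t', m') (t', n) ∧
      Relation.ReflTransGen (fun s s' => MStep H s none s') (t'', m'') (t'', n) := by
  obtain ⟨⟨t₀, n⟩, hn₁, hn₂⟩ := h1.join h2
  obtain rfl : t₀ = t' := TauStep.reflTransGen_fst_eq hn₁
  obtain rfl : t₀ = t'' := TauStep.reflTransGen_fst_eq hn₂
  exact ⟨rfl, n, hn₁, hn₂⟩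
end

section
/- Length irrevocability of history rejection: if a monitor m rejects a history containing trace t, i.e., reject(H ∪ {t}, b, m), then it also rejects the history where t is extended by any suffix u: reject(H ∪ {t·u}, b, m). -/
/-- `aft H a`: the continuations of the traces in `H` that start with `a`. -/
def aft {Act : Type} (H : Set (List Act)) (a : Act) : Set (List Act) :=
  { t | a :: t ∈ H }

/-- The history rejection judgement `reject(H, b, m)` with determinacy
predicate `Det` and externality predicate `Ext` on actions. -/
inductive Reject {Act : Type} (Det : Act → Bool) (Ext : Act → Prop) :
    Set (List Act) → Bool → Mon Act → Prop
  | no : ∀ {H : Set (List Act)} {b : Bool}, H ≠ ∅ → Reject Det Ext H b .no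
  | act : ∀ {H : Set (List Act)} {b : Bool} {a : Act} {m : Mon Act},
      Reject Det Ext (aft H a) (b && Det a) m → Reject Det Ext H b (.act a m)
  | actI : ∀ {H : Set (List Act)} {b : Bool} {a i : Act} {m : Mon Act},
      ¬ Ext i → Reject Det Ext (aft H i) (b && Det i) (.act a m) →
      Reject Det Ext H b (.act a m)
  | parAL : ∀ {H : Set (List Act)} {b : Bool} {m n : Mon Act},
      Reject Det Ext H b m → Reject Det Ext H b (.par true m n)
  | parAR : ∀ {H : Set (List Act)} {b : Bool} {m n : Mon Act},
      Reject Det Ext H b n → Reject Det Ext H b (.par true m n)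
  | parO : ∀ {H : Set (List Act)} {m n : Mon Act},
      Reject Det Ext H true m → Reject Det Ext H true n →
      Reject Det Ext H true (.par false m n)
  | recur : ∀ {H : Set (List Act)} {b : Bool} {m : Mon Act},
      Reject Det Ext H b (m.substV 0 (.mrec m)) → Reject Det Ext H b (.mrec m)

/-! Rejection only ever inspects a history through the tests "is it nonempty?" and "which
continuations follow the action `a`?", and both are monotone under the preorder in which every
trace of `H` is a prefix of some trace of `H'`. Replacing `t` by `t ++ u` climbs in this
preorder. -/

def PrefixLE {Act : Type} (H H' : Set (List Act)) : Prop :=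
  ∀ s ∈ H, ∃ s' ∈ H', s <+: s'

namespace PrefixLE

variable {Act : Type} {H H' : Set (List Act)}

theorem ne_empty (h : PrefixLE H H') (hH : H ≠ ∅) : H' ≠ ∅ := by
  obtain ⟨s, hs⟩ := Set.nonempty_iff_ne_empty.mpr hH
  obtain ⟨s', hs', -⟩ := h s hs
  exact Set.nonempty_iff_ne_empty.mp ⟨s', hs'⟩

theorem aft (h : PrefixLE H H') (a : Act) : PrefixLE (aft H a) (aft H' a) := by
  intro s hs
  obtain ⟨s', hs', v, rfl⟩ := h (a :: s) hs
  exact ⟨s ++ v, hs', v, rfl⟩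

end PrefixLE

theorem prefixLE_insert_append {Act : Type} (H : Set (List Act)) (t u : List Act) :
    PrefixLE (insert t H) (insert (t ++ u) H) := by
  rintro s (rfl | hs)
  · exact ⟨s ++ u, Set.mem_insert _ _, List.prefix_append s u⟩
  · exact ⟨s, Set.mem_insert_of_mem _ hs, List.prefix_refl s⟩

theorem Reject.of_prefixLE {Act : Type} {Det : Act → Bool} {Ext : Act → Prop}
    {H H' : Set (List Act)} {b : Bool} {m : Mon Act}
    (h : Reject Det Ext H b m) (hH : PrefixLE H H') : Reject Det Ext H' b m := by
  induction h generalizing H' with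
  | no hne => exact .no (hH.ne_empty hne)
  | act _ ih => exact .act (ih (hH.aft _))
  | actI hi _ ih => exact .actI hi (ih (hH.aft _))
  | parAL _ ih => exact .parAL (ih hH)
  | parAR _ ih => exact .parAR (ih hH)
  | parO _ _ ih₁ ih₂ => exact .parO (ih₁ hH) (ih₂ hH)
  | recur _ ih => exact .recur (ih hH)

/-- Length irrevocability of history rejection: if a monitor rejects a history
containing the trace `t`, it also rejects the history where `t` is extended by
any suffix `u`. -/
theorem reject_length_irrevocable {Act : Type} (Det : Act → Bool)
    (Ext : Act → Prop) (H : Set (List Act)) (t u : List Act) (b : Bool)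
    (m : Mon Act) (h : Reject Det Ext (insert t H) b m) :
    Reject Det Ext (insert (t ++ u) H) b m :=
  h.of_prefixLE (prefixLE_insert_append H t u)
end

section
/- Width irrevocability of history rejection: if reject(H, b, m) then reject(H ∪ H', b, m) for any additional finite set of traces H'. -/
theorem aft_mono {Act : Type} {H H' : Set (List Act)} (hH : H ⊆ H') (a : Act) :
    aft H a ⊆ aft H' a :=
  fun _ ht => hH ht

theorem Reject.mono {Act : Type} {Det : Act → Bool} {Ext : Act → Prop}
    {H H' : Set (List Act)} {b : Bool} {m : Mon Act}
    (h : Reject Det Ext H b m) (hH : H ⊆ H') : Reject Det Ext H' b m := by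
  induction h generalizing H' with
  | no hne => exact .no (Set.nonempty_iff_ne_empty.mp
      ((Set.nonempty_iff_ne_empty.mpr hne).mono hH))
  | act _ ih => exact .act (ih (aft_mono hH _))
  | actI hi _ ih => exact .actI hi (ih (aft_mono hH _))
  | parAL _ ih => exact .parAL (ih hH)
  | parAR _ ih => exact .parAR (ih hH)
  | parO _ _ ihm ihn => exact .parO (ihm hH) (ihn hH)
  | recur _ ih => exact .recur (ih hH)

theorem reject_width_irrevocable_general {Act : Type} (Det : Act → Bool)
    (Ext : Act → Prop) (H H' : Set (List Act)) (b : Bool)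
    (m : Mon Act) (h : Reject Det Ext H b m) :
    Reject Det Ext (H ∪ H') b m :=
  h.mono Set.subset_union_left

/-- Width irrevocability of history rejection: rejection of a history is
preserved when any additional finite set of traces is added. -/
theorem reject_width_irrevocable {Act : Type} (Det : Act → Bool)
    (Ext : Act → Prop) (H H' : Set (List Act)) (b : Bool)
    (m : Mon Act) (hfin : H'.Finite) (h : Reject Det Ext H b m) :
    Reject Det Ext (H ∪ H') b m :=
  reject_width_irrevocable_general Det Ext H H' b m h
end

section
/- Rejection implies violation for synthesized monitors: for all formulae φ in the monitorable fragment sHML∨, if reject(H, b, synth(φ)) then (H, b) ⊨viol φ, where ⊨viol is the history violation relation. -/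
/-- Formulae of the monitorable fragment sHML∨ (de Bruijn recursion
variables): truth, falsity, conjunction, disjunction, universal modality,
greatest fixed point, and recursion variables. -/
inductive SFrm (Act : Type) : Type
  | tt : SFrm Act
  | ff : SFrm Act
  | and : SFrm Act → SFrm Act → SFrm Act
  | or : SFrm Act → SFrm Act → SFrm Act
  | box : Act → SFrm Act → SFrm Act
  | max : SFrm Act → SFrm Act
  | var : Nat → SFrm Act

/-- Substitute formula `s` for variable `k` in a formula. -/
def SFrm.substV {Act : Type} : SFrm Act → Nat → SFrm Act → SFrm Act
  | .tt, _, _ => .tt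
  | .ff, _, _ => .ff
  | .and φ ψ, k, s => .and (φ.substV k s) (ψ.substV k s)
  | .or φ ψ, k, s => .or (φ.substV k s) (ψ.substV k s)
  | .box a φ, k, s => .box a (φ.substV k s)
  | .max φ, k, s => .max (φ.substV (k + 1) s)
  | .var n, k, s => if n = k then s else .var n

/-- The history violation relation `(H, b) ⊨viol φ`, relative to the
determinacy predicate `Det` and externality predicate `Ext` on actions. -/
inductive Viol {Act : Type} (Det : Act → Bool) (Ext : Act → Prop) :
    Set (List Act) → Bool → SFrm Act → Prop
  | ff : ∀ {H : Set (List Act)} {b : Bool}, H ≠ ∅ → Viol Det Ext H b .ff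
  | um : ∀ {H : Set (List Act)} {b : Bool} {a : Act} {φ : SFrm Act},
      Viol Det Ext (aft H a) (b && Det a) φ → Viol Det Ext H b (.box a φ)
  | umPre : ∀ {H : Set (List Act)} {b : Bool} {a i : Act} {φ : SFrm Act},
      ¬ Ext i → Viol Det Ext (aft H i) (b && Det i) (.box a φ) →
      Viol Det Ext H b (.box a φ)
  | andL : ∀ {H : Set (List Act)} {b : Bool} {φ ψ : SFrm Act},
      Viol Det Ext H b φ → Viol Det Ext H b (.and φ ψ)
  | andR : ∀ {H : Set (List Act)} {b : Bool} {φ ψ : SFrm Act},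
      Viol Det Ext H b ψ → Viol Det Ext H b (.and φ ψ)
  | or : ∀ {H : Set (List Act)} {φ ψ : SFrm Act},
      Viol Det Ext H true φ → Viol Det Ext H true ψ →
      Viol Det Ext H true (.or φ ψ)
  | max : ∀ {H : Set (List Act)} {b : Bool} {φ : SFrm Act},
      Viol Det Ext H b (φ.substV 0 (.max φ)) → Viol Det Ext H b (.max φ)

/-- The monitor synthesis function. -/
def synth {Act : Type} : SFrm Act → Mon Act
  | .ff => .no
  | .tt => .yes
  | .and φ ψ => .par true (synth φ) (synth ψ)
  | .or φ ψ => .par false (synth φ) (synth ψ)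
  | .box a φ => .act a (synth φ)
  | .max φ => .mrec (synth φ)
  | .var n => .var n

/-! Every rule of the rejection judgement on a synthesized monitor is the image under `synth` of
exactly one violation rule, so induction on the rejection derivation, inverting `synth` at each
step, rebuilds a violation derivation. The only step that is not purely syntactic is recursion,
where unfolding has to commute with synthesis. -/

theorem synth_substV {Act : Type} (φ : SFrm Act) (k : Nat) (s : SFrm Act) :
    synth (φ.substV k s) = (synth φ).substV k (synth s) := by
  induction φ generalizing k with
  | var n => by_cases h : n = k <;> simp [SFrm.substV, Mon.substV, synth, h]
  | _ => simp_all [SFrm.substV, Mon.substV, synth]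

theorem viol_of_reject_of_synth_eq {Act : Type} {Det : Act → Bool} {Ext : Act → Prop}
    {H : Set (List Act)} {b : Bool} {m : Mon Act} (h : Reject Det Ext H b m) :
    ∀ φ : SFrm Act, synth φ = m → Viol Det Ext H b φ := by
  induction h with
  | no hne => rintro (_ | _ | _ | _ | _ | _ | _) ⟨⟩; exact .ff hne
  | act _ ih => rintro (_ | _ | _ | _ | ⟨_, ψ⟩ | _ | _) ⟨⟩; exact .um (ih ψ rfl)
  | actI hi _ ih =>
    rintro (_ | _ | _ | _ | ⟨_, ψ⟩ | _ | _) ⟨⟩; exact .umPre hi (ih (.box _ ψ) rfl)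
  | parAL _ ih => rintro (_ | _ | ⟨ψ₁, ψ₂⟩ | _ | _ | _ | _) ⟨⟩; exact .andL (ih ψ₁ rfl)
  | parAR _ ih => rintro (_ | _ | ⟨ψ₁, ψ₂⟩ | _ | _ | _ | _) ⟨⟩; exact .andR (ih ψ₂ rfl)
  | parO _ _ ih₁ ih₂ =>
    rintro (_ | _ | _ | ⟨ψ₁, ψ₂⟩ | _ | _ | _) ⟨⟩; exact .or (ih₁ ψ₁ rfl) (ih₂ ψ₂ rfl)
  | recur _ ih =>
    rintro (_ | _ | _ | _ | _ | ψ | _) ⟨⟩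
    exact .max (ih _ (synth_substV ψ 0 (.max ψ)))

/-- Rejection implies violation for synthesized monitors: if the synthesized
monitor of `φ` rejects the history `H` with flag `b`, then `(H, b) ⊨viol φ`. -/
theorem reject_synth_implies_viol {Act : Type} (Det : Act → Bool)
    (Ext : Act → Prop) (φ : SFrm Act) (H : Set (List Act)) (b : Bool)
    (h : Reject Det Ext H b (synth φ)) :
    Viol Det Ext H b φ :=
  viol_of_reject_of_synth_eq h φ rfl
end

section
/- Lower-bound function: substitution monotonicity. For the lower-bound function lb on sHML∨ formulae in normal form: (1) lb(φ[ψ/X]) = lb(φ[max Y.ψ / X]); (2) if lb(ψ) ≤ lb(χ) then lb(φ[ψ/X]) ≤ lb(φ[χ/X]); (3) if lb(φ) ≤ lb(ψ) then lb(φ) ≤ lb(ψ[φ/X]). In particular lb(φ) ≤ lb(φ[φ/X]). -/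
/-- The actions of the top-level boxes of a disjunction of modal formulae. -/
def topActs {Act : Type} : SFrm Act → Set Act
  | .box a _ => {a}
  | .or φ ψ => topActs φ ∪ topActs ψ
  | _ => ∅

/-- `φ` is (shaped as) a disjunction of box formulae `⋁ᵢ [aᵢ]φᵢ`. -/
def IsBoxDisj {Act : Type} : SFrm Act → Prop
  | .box _ _ => True
  | .or φ ψ => IsBoxDisj φ ∧ IsBoxDisj ψ
  | _ => False

/-- Normal-form formulae (sHML_nf): disjunctions only combine box formulae and
the actions of the top-level boxes in a disjunction are pairwise distinct. -/
inductive NF {Act : Type} : SFrm Act → Prop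
  | tt : NF .tt
  | ff : NF .ff
  | var : ∀ n, NF (.var n)
  | and : ∀ {φ ψ : SFrm Act}, NF φ → NF ψ → NF (.and φ ψ)
  | max : ∀ {φ : SFrm Act}, NF φ → NF (.max φ)
  | box : ∀ {φ : SFrm Act} (a : Act), NF φ → NF (.box a φ)
  | or : ∀ {φ ψ : SFrm Act}, NF φ → NF ψ → IsBoxDisj φ → IsBoxDisj ψ →
      Disjoint (topActs φ) (topActs ψ) → NF (.or φ ψ)

/-- The history lower-bound function `lb : sHML∨ → ℕ∞`. -/
noncomputable def lb {Act : Type} : SFrm Act → ℕ∞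
  | .ff => 0
  | .tt => ⊤
  | .var _ => ⊤
  | .box _ φ => lb φ
  | .max φ => lb φ
  | .and φ ψ => min (lb φ) (lb ψ)
  | .or φ ψ => lb φ + lb ψ + 1

/-! `lb` is built from `min` and `x + y + 1`, both monotone, so `lb (φ[s/X])` is monotone in
`lb s`; and since both operations are subadditive in the sense `min c (x ⊕ y) ≤ min c x ⊕ min c y`,
an induction on `φ` gives `min (lb s) (lb φ) ≤ lb (φ[s/X])`. -/

theorem min_add_le_min_add_min {α : Type*} [AddCommMonoid α] [LinearOrder α]
    [CanonicallyOrderedAdd α] (c a b : α) : min c (a + b) ≤ min c a + min c b := by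
  rcases le_total c a with hca | hac
  · rw [min_eq_left hca]
    exact (min_le_left _ _).trans le_self_add
  rcases le_total c b with hcb | hbc
  · rw [min_eq_left hcb]
    exact (min_le_left _ _).trans le_add_self
  · rw [min_eq_right hac, min_eq_right hbc]
    exact min_le_right _ _

namespace SFrm

variable {Act : Type}

theorem lb_substV_mono {s s' : SFrm Act} (h : lb s ≤ lb s') (φ : SFrm Act) (k : ℕ) :
    lb (φ.substV k s) ≤ lb (φ.substV k s') := by
  induction φ generalizing k with
  | var n => simp only [substV]; split_ifs <;> simp [h]
  | and φ ψ ihφ ihψ => exact min_le_min (ihφ k) (ihψ k)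
  | or φ ψ ihφ ihψ => exact add_le_add (add_le_add (ihφ k) (ihψ k)) le_rfl
  | box a φ ih => exact ih k
  | max φ ih => exact ih (k + 1)
  | tt | ff => exact le_rfl

theorem lb_substV_congr {s s' : SFrm Act} (h : lb s = lb s') (φ : SFrm Act) (k : ℕ) :
    lb (φ.substV k s) = lb (φ.substV k s') :=
  le_antisymm (lb_substV_mono h.le φ k) (lb_substV_mono h.ge φ k)

theorem min_lb_le_lb_substV (s φ : SFrm Act) (k : ℕ) :
    min (lb s) (lb φ) ≤ lb (φ.substV k s) := by
  induction φ generalizing k with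
  | var n => simp only [substV]; split_ifs <;> simp [lb]
  | and φ ψ ihφ ihψ =>
    exact le_min ((min_le_min_left _ (min_le_left _ _)).trans (ihφ k))
      ((min_le_min_left _ (min_le_right _ _)).trans (ihψ k))
  | or φ ψ ihφ ihψ =>
    simp only [substV, lb]
    calc min (lb s) (lb φ + lb ψ + 1) ≤ min (lb s + 1) (lb φ + lb ψ + 1) :=
          min_le_min_right _ le_self_add
      _ = min (lb s) (lb φ + lb ψ) + 1 := min_add_add_right _ _ _
      _ ≤ min (lb s) (lb φ) + min (lb s) (lb ψ) + 1 := by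
          gcongr; exact min_add_le_min_add_min _ _ _
      _ ≤ lb (φ.substV k s) + lb (ψ.substV k s) + 1 :=
          add_le_add (add_le_add (ihφ k) (ihψ k)) le_rfl
  | box a φ ih => exact ih k
  | max φ ih => exact ih (k + 1)
  | tt => exact le_top
  | ff => simp only [substV, lb, min_le_right]

end SFrm

theorem lb_subst_props_general {Act : Type} (φ ψ χ : SFrm Act) (k : Nat) :
    (lb (φ.substV k ψ) = lb (φ.substV k (SFrm.max ψ))) ∧
    (lb ψ ≤ lb χ → lb (φ.substV k ψ) ≤ lb (φ.substV k χ)) ∧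
    (lb φ ≤ lb ψ → lb φ ≤ lb (ψ.substV k φ)) ∧
    lb φ ≤ lb (φ.substV k φ) := by
  refine ⟨SFrm.lb_substV_congr (s := ψ) (s' := ψ.max) rfl φ k,
    fun h => SFrm.lb_substV_mono h φ k, fun h => ?_, ?_⟩
  · simpa [min_eq_left h] using SFrm.min_lb_le_lb_substV φ ψ k
  · simpa using SFrm.min_lb_le_lb_substV φ φ k

/-- Substitution monotonicity properties of the lower-bound function on
normal-form formulae: (1) `lb (φ[ψ/X]) = lb (φ[max Y.ψ/X])`; (2) `lb` of a
substitution is monotone in the substituted formula; (3) if `lb φ ≤ lb ψ` then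
`lb φ ≤ lb (ψ[φ/X])`; in particular `lb φ ≤ lb (φ[φ/X])`. -/
theorem lb_subst_props {Act : Type} (φ ψ χ : SFrm Act) (k : Nat)
    (hφ : NF φ) (hψ : NF ψ) (hχ : NF χ) :
    (lb (φ.substV k ψ) = lb (φ.substV k (SFrm.max ψ))) ∧
    (lb ψ ≤ lb χ → lb (φ.substV k ψ) ≤ lb (φ.substV k χ)) ∧
    (lb φ ≤ lb ψ → lb φ ≤ lb (ψ.substV k φ)) ∧
    lb φ ≤ lb (φ.substV k φ) :=
  lb_subst_props_general φ ψ χ k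
end
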